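/- arXiv:cs/0003023 — 5 statements merged into one kernel-verified Lean document; each statement's English description precedes it below -/
import Mathlib

section
/- The ranking function z determined by the z-partition of a σ-consistent probabilistic default theory T = (P, D) is a default ranking admissible with T: every set D' ⊆ D that is under P in conflict with some default d ∈ D contains a default d' with z(d') < z(d). -/
open scoped Classical

/-- Classical propositional formulas over atoms `α`. -/
inductive PForm (α : Type) where
  | atom : α → PForm α
  | fls : PForm α
  | tru : PForm α
  | neg : PForm α → PForm α
  | conj : PForm α → PForm α → PForm α

/-- Satisfaction of a classical formula in a possible world `I : α → Bool`. -/
def PForm.sat {α : Type} (I : α → Bool) : PForm α → Bool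
  | .atom a => I a
  | .fls => false
  | .tru => true
  | .neg φ => !(PForm.sat I φ)
  | .conj φ ψ => PForm.sat I φ && PForm.sat I ψ

/-- Material implication. -/
def PForm.imp {α : Type} (φ ψ : PForm α) : PForm α := .neg (.conj φ (.neg ψ))

/-- A probabilistic interpretation: a probability function on possible worlds. -/
structure PInterp (α : Type) [Fintype α] [DecidableEq α] where
  p : (α → Bool) → ℝ
  nonneg : ∀ I, 0 ≤ p I
  sum_one : ∑ I : α → Bool, p I = 1

variable {α : Type} [Fintype α] [DecidableEq α]

/-- Probability of a classical formula. -/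
noncomputable def PInterp.prob (Pr : PInterp α) (φ : PForm α) : ℝ :=
  ∑ I ∈ Finset.univ.filter (fun I : α → Bool => PForm.sat I φ = true), Pr.p I

/-- Conditional probability `Pr(ψ|φ)`. -/
noncomputable def PInterp.cond (Pr : PInterp α) (ψ φ : PForm α) : ℝ :=
  Pr.prob (PForm.conj ψ φ) / Pr.prob φ

/-- A conditional constraint `(cons|ante)[lo,up]` (strict or defeasible). -/
structure CC (α : Type) where
  cons : PForm α
  ante : PForm α
  lo : ℝ
  up : ℝ

/-- Truth of a conditional constraint in a probabilistic interpretation. -/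
def satCC (Pr : PInterp α) (c : CC α) : Prop :=
  Pr.prob c.ante = 0 ∨ (c.lo ≤ Pr.cond c.cons c.ante ∧ Pr.cond c.cons c.ante ≤ c.up)

/-- Probabilistic formulas: closure of conditional constraints under ¬ and ∧. -/
inductive ProbForm (α : Type) where
  | cc : CC α → ProbForm α
  | neg : ProbForm α → ProbForm α
  | conj : ProbForm α → ProbForm α → ProbForm α

/-- Truth of probabilistic formulas. -/
def psat (Pr : PInterp α) : ProbForm α → Prop
  | .cc c => satCC Pr c
  | .neg F => ¬ psat Pr F
  | .conj F G => psat Pr F ∧ psat Pr G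

/-- `Pr` is a model of a set of probabilistic formulas. -/
def modelsSet (Pr : PInterp α) (F : Set (ProbForm α)) : Prop := ∀ G ∈ F, psat Pr G

/-- `Pr` is a model of a finite set of conditional constraints. -/
def modelsF (Pr : PInterp α) (S : Finset (CC α)) : Prop := ∀ c ∈ S, satCC Pr c

/-- `Pr` verifies a default. -/
def verifies (Pr : PInterp α) (c : CC α) : Prop :=
  Pr.prob c.ante = 1 ∧ c.lo ≤ Pr.cond c.cons c.ante ∧ Pr.cond c.cons c.ante ≤ c.up

/-- `D` tolerates `d` under `P`. -/
def tolerates (P D : Finset (CC α)) (d : CC α) : Prop :=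
  ∃ Pr : PInterp α, modelsF Pr (P ∪ D) ∧ verifies Pr d

/-- `D` is under `P` in conflict with `d`. -/
def inConflict (P D : Finset (CC α)) (d : CC α) : Prop := ¬ tolerates P D d

/-- A default ranking admissible with `T = (P, D)`. -/
def rankAdmissible (P D : Finset (CC α)) (σ : CC α → ℕ) : Prop :=
  ∀ D' ⊆ D, ∀ d ∈ D, inConflict P D' d → ∃ d' ∈ D', σ d' < σ d

/-- A priority ordering admissible with `T = (P, D)`. -/
def precAdmissible (P D : Finset (CC α)) (prec : CC α → CC α → Prop) : Prop :=
  ∀ D' ⊆ D, ∀ d ∈ D, inConflict P D' d → ∃ d' ∈ D', prec d' d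

/-- The remainders in the construction of the z-partition. -/
noncomputable def restD (P D : Finset (CC α)) : ℕ → Finset (CC α)
  | 0 => D
  | i + 1 => (restD P D i).filter (fun d => ¬ tolerates P (restD P D i) d)

/-- The `i`-th member `D_i` of the z-partition. -/
noncomputable def stratum (P D : Finset (CC α)) (i : ℕ) : Finset (CC α) :=
  (restD P D i).filter (fun d => tolerates P (restD P D i) d)

/-- σ-consistency: the z-partition covers all of `D`. -/
def zConsistent (P D : Finset (CC α)) : Prop := ∀ d ∈ D, ∃ i, d ∈ stratum P D i

/-- The default ranking `z` induced by the z-partition. -/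
noncomputable def zrank (P D : Finset (CC α)) (d : CC α) : ℕ :=
  sInf {i | d ∈ stratum P D i}

/-- The probability ranking `κ^z`. -/
noncomputable def kappaZ (P D : Finset (CC α)) (Pr : PInterp α) : ℕ∞ :=
  if ¬ modelsF Pr P then ⊤
  else if modelsF Pr (P ∪ D) then 0
  else 1 + ((D.filter (fun d => ¬ satCC Pr d)).sup (fun d => (zrank P D d : ℕ∞)))

/-- Extension of `κ^z` to strict probabilistic formulas. -/
noncomputable def kappaZF (P D : Finset (CC α)) (F : ProbForm α) : ℕ∞ :=
  sInf {n : ℕ∞ | ∃ Pr : PInterp α, psat Pr F ∧ kappaZ P D Pr = n}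

/-- Number of defaults of the stratum `D_i` satisfied by `Pr`. -/
noncomputable def lexCard (P D : Finset (CC α)) (i : ℕ) (Pr : PInterp α) : ℕ :=
  ((stratum P D i).filter (fun d => satCC Pr d)).card

/-- Lexicographic preference induced by the z-partition. -/
def lexPref (P D : Finset (CC α)) (Pr Pr' : PInterp α) : Prop :=
  ∃ i, lexCard P D i Pr' < lexCard P D i Pr ∧
    ∀ j, i < j → lexCard P D j Pr = lexCard P D j Pr'

/-- `≺`-preference on probabilistic interpretations. -/
def precPref (D : Finset (CC α)) (prec : CC α → CC α → Prop)
    (Pr Pr' : PInterp α) : Prop :=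
  (D.filter fun d => ¬ satCC Pr d) ≠ (D.filter fun d => ¬ satCC Pr' d) ∧
  ∀ d ∈ D, ¬ satCC Pr d → satCC Pr' d →
    ∃ d' ∈ D, prec d d' ∧ satCC Pr d' ∧ ¬ satCC Pr' d'

/-- Convex combination of two probabilistic interpretations. -/
noncomputable def mix (a : ℝ) (h0 : 0 ≤ a) (h1 : a ≤ 1) (Pr Pr' : PInterp α) :
    PInterp α where
  p I := a * Pr.p I + (1 - a) * Pr'.p I
  nonneg I := add_nonneg (mul_nonneg h0 (Pr.nonneg I))
    (mul_nonneg (by linarith) (Pr'.nonneg I))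
  sum_one := by
    rw [Finset.sum_add_distrib, ← Finset.mul_sum, ← Finset.mul_sum,
      Pr.sum_one, Pr'.sum_one]
    ring

lemma mem_restD_or {α : Type} [Fintype α] [DecidableEq α]
    (P D : Finset (CC α)) (d : CC α) (hd : d ∈ D) (k : ℕ) :
    d ∈ restD P D k ∨ ∃ i < k, d ∈ stratum P D i := by
  induction k with
  | zero => exact Or.inl hd
  | succ n ih =>
    rcases ih with h | ⟨i, hi, hs⟩
    · by_cases ht : tolerates P (restD P D n) d
      · exact Or.inr ⟨n, Nat.lt_succ_self n, Finset.mem_filter.mpr ⟨h, ht⟩⟩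
      · exact Or.inl (Finset.mem_filter.mpr ⟨h, ht⟩)
    · exact Or.inr ⟨i, hi.trans (Nat.lt_succ_self n), hs⟩

theorem stmt9 {α : Type} [Fintype α] [DecidableEq α]
    (P D : Finset (CC α)) (hcons : zConsistent P D) :
    rankAdmissible P D (zrank P D) := by

  intro D' hD' d hd hconf
  by_contra hno
  push_neg at hno
  set k := zrank P D d with hk
  have hdk : d ∈ stratum P D k := Nat.sInf_mem (hcons d hd)
  have hsub : D' ⊆ restD P D k := by
    intro d' hd'
    rcases mem_restD_or P D d' (hD' hd') k with h | ⟨i, hi, hs⟩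
    · exact h
    · have h1 : zrank P D d' ≤ i := Nat.sInf_le hs
      have h2 := hno d' hd'
      omega
  have ht : tolerates P (restD P D k) d := (Finset.mem_filter.mp hdk).2
  rcases ht with ⟨Pr, hm, hv⟩
  refine hconf ⟨Pr, fun c hc => hm c ?_, hv⟩
  rcases Finset.mem_union.mp hc with h | h
  · exact Finset.mem_union_left _ h
  · exact Finset.mem_union_right _ (hsub h)
end

section
/- Let T = (P, D) be a σ-consistent probabilistic default theory with z-partition (D_0,…,D_k) and default ranking z. Then the probability ranking κ^z, defined by κ^z(Pr) = ∞ if Pr ⊭ P, κ^z(Pr) = 0 if Pr ⊨ P ∪ D, and κ^z(Pr) = 1 + max{z(d) : d ∈ D, Pr ⊭ d} otherwise, is admissible with T: κ^z(¬F) = ∞ for all F ∈ P, and for every default (ψ‖φ)[l,u] ∈ D, κ^z((φ|⊤)[1,1]) < ∞ and κ^z((φ|⊤)[1,1] ∧ (ψ|φ)[l,u]) < κ^z((φ|⊤)[1,1] ∧ ¬(ψ|φ)[l,u]). -/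
open scoped Classical

variable {α : Type} [Fintype α] [DecidableEq α]

/-!
Let `j = z(d)`. Since `d ∈ D_j`, it is tolerated under `P` by the remainder `D_j ∪ … ∪ D_k`,
so some `Pr ⊨ P` verifies `d` (hence satisfies `(φ|⊤)[1,1]` and `d`) and violates only
defaults of rank `< j`; thus `κ^z(Pr) ≤ j`. Conversely every interpretation violating `d`
has `κ^z ≥ j + 1`, and every one violating a member of `P` has `κ^z = ∞`.
-/

lemma PInterp.prob_tru (Pr : PInterp α) : Pr.prob PForm.tru = 1 := by
  simpa [PInterp.prob, PForm.sat] using Pr.sum_one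

lemma PInterp.prob_conj_tru (Pr : PInterp α) (φ : PForm α) :
    Pr.prob (PForm.conj φ PForm.tru) = Pr.prob φ := by
  simp [PInterp.prob, PForm.sat]

lemma satCC_certain_of_prob_eq_one {Pr : PInterp α} {φ : PForm α} (h : Pr.prob φ = 1) :
    satCC Pr ⟨φ, PForm.tru, 1, 1⟩ :=
  Or.inr <| by simp [PInterp.cond, Pr.prob_tru, Pr.prob_conj_tru, h]

section ZPartition

variable (P D : Finset (CC α))

lemma restD_antitone : Antitone (restD P D) :=
  antitone_nat_of_succ_le fun _ => Finset.filter_subset _ _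

lemma stratum_subset_restD (i : ℕ) : stratum P D i ⊆ restD P D i :=
  Finset.filter_subset _ _

variable {P D}

lemma tolerates_of_mem_stratum {d : CC α} {i : ℕ} (h : d ∈ stratum P D i) :
    tolerates P (restD P D i) d :=
  (Finset.mem_filter.1 h).2

lemma mem_stratum_zrank {d : CC α} (h : ∃ i, d ∈ stratum P D i) :
    d ∈ stratum P D (zrank P D d) :=
  Nat.sInf_mem h

lemma zrank_lt_of_notMem_restD {d : CC α} (h : ∃ i, d ∈ stratum P D i) {j : ℕ}
    (hj : d ∉ restD P D j) : zrank P D d < j := by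
  by_contra! hle
  exact hj (restD_antitone P D hle (stratum_subset_restD P D _ (mem_stratum_zrank h)))

end ZPartition

section KappaZ

variable {P D : Finset (CC α)}

lemma kappaZ_eq_top {Pr : PInterp α} (h : ¬ modelsF Pr P) : kappaZ P D Pr = ⊤ :=
  if_pos h

lemma kappaZ_le_of_modelsF_restD (hcons : zConsistent P D) {Pr : PInterp α} {j : ℕ}
    (hm : modelsF Pr (P ∪ restD P D j)) : kappaZ P D Pr ≤ j := by
  have hP : modelsF Pr P := fun c hc => hm c (Finset.mem_union_left _ hc)
  have hviol_lt : ∀ d ∈ D, ¬ satCC Pr d → zrank P D d < j := fun d hd hv =>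
    zrank_lt_of_notMem_restD (hcons d hd) fun hmem => hv (hm d (Finset.mem_union_right _ hmem))
  unfold kappaZ
  rw [if_neg (not_not.2 hP)]
  split_ifs with hPD
  · exact zero_le
  obtain ⟨d, hd, hv⟩ : ∃ d ∈ D, ¬ satCC Pr d := by
    by_contra! hsat
    exact hPD fun c hc => (Finset.mem_union.1 hc).elim (hP c) (hsat c)
  have hsup : (D.filter fun d => ¬ satCC Pr d).sup (fun d => (zrank P D d : ℕ∞)) < j := by
    refine (Finset.sup_lt_iff ?_).2 fun c hc => ?_
    · rw [bot_eq_zero]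
      exact_mod_cast (Nat.zero_le _).trans_lt (hviol_lt d hd hv)
    · rw [Finset.mem_filter] at hc
      exact_mod_cast hviol_lt c hc.1 hc.2
  rw [add_comm]
  exact Order.add_one_le_of_lt hsup

lemma zrank_lt_kappaZ {Pr : PInterp α} {d : CC α} (hd : d ∈ D) (hv : ¬ satCC Pr d) :
    (zrank P D d : ℕ∞) < kappaZ P D Pr := by
  by_cases hP : modelsF Pr P
  · have hPD : ¬ modelsF Pr (P ∪ D) := fun h => hv (h d (Finset.mem_union_right _ hd))
    have hle := Finset.le_sup (f := fun d => (zrank P D d : ℕ∞))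
      (show d ∈ D.filter fun d => ¬ satCC Pr d from Finset.mem_filter.2 ⟨hd, hv⟩)
    simp only [kappaZ, hP, hPD, not_true_eq_false, if_false]
    rw [add_comm]
    exact (ENat.lt_add_one_iff' (ENat.natCast_ne_top _)).2 hle
  · rw [kappaZ_eq_top hP]
    exact ENat.natCast_lt_top _

lemma kappaZF_le {Pr : PInterp α} {F : ProbForm α} (h : psat Pr F) :
    kappaZF P D F ≤ kappaZ P D Pr :=
  sInf_le ⟨Pr, h, rfl⟩

lemma le_kappaZF {F : ProbForm α} {n : ℕ∞}
    (h : ∀ Pr : PInterp α, psat Pr F → n ≤ kappaZ P D Pr) : n ≤ kappaZF P D F :=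
  le_sInf fun _ ⟨Pr, hPr, hn⟩ => hn ▸ h Pr hPr

end KappaZ

theorem stmt10 {α : Type} [Fintype α] [DecidableEq α]
    (P D : Finset (CC α)) (hcons : zConsistent P D) :
    (∀ c ∈ P, kappaZF P D (ProbForm.neg (ProbForm.cc c)) = ⊤) ∧
    (∀ d ∈ D,
      kappaZF P D (ProbForm.cc ⟨d.ante, PForm.tru, 1, 1⟩) < ⊤ ∧
      kappaZF P D (ProbForm.conj (ProbForm.cc ⟨d.ante, PForm.tru, 1, 1⟩)
          (ProbForm.cc d)) <
        kappaZF P D (ProbForm.conj (ProbForm.cc ⟨d.ante, PForm.tru, 1, 1⟩)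
          (ProbForm.neg (ProbForm.cc d)))) := by
  refine ⟨fun c hc => top_le_iff.1 <| le_kappaZF fun Pr hPr =>
    (kappaZ_eq_top fun hP => hPr (hP c hc)).ge, fun d hd => ?_⟩
  set certain : ProbForm α := .cc ⟨d.ante, PForm.tru, 1, 1⟩
  obtain ⟨Pr, hm, hante, hver⟩ := tolerates_of_mem_stratum (mem_stratum_zrank (hcons d hd))
  have hcertain : psat Pr certain := satCC_certain_of_prob_eq_one hante
  have hκ : kappaZ P D Pr ≤ zrank P D d := kappaZ_le_of_modelsF_restD hcons hm
  refine ⟨(kappaZF_le hcertain).trans_lt (hκ.trans_lt (ENat.natCast_lt_top _)), ?_⟩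
  calc kappaZF P D (.conj certain (.cc d)) ≤ zrank P D d :=
        (kappaZF_le (F := .conj certain (.cc d)) ⟨hcertain, Or.inr hver⟩).trans hκ
    _ < zrank P D d + 1 := by exact_mod_cast Nat.lt_succ_self _
    _ ≤ kappaZF P D (.conj certain (.neg (.cc d))) :=
        le_kappaZF fun _ hPr' => Order.add_one_le_of_lt (zrank_lt_kappaZ hd hPr'.2)
end

section
/- Let T = (P, D) be a probabilistic default theory and KB a probabilistic knowledge base such that P ∪ D ∪ {KB} is satisfiable. Then a probabilistic interpretation Pr is a lexicographically minimal model of P ∪ {KB} if and only if Pr is a model of P ∪ D ∪ {KB}. Consequently, KB lexicographically entails a strict probabilistic formula F iff P ∪ D ∪ {KB} ⊨ F. -/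
open scoped Classical

variable {α : Type} [Fintype α] [DecidableEq α]

lemma restD_subset (P D : Finset (CC α)) : ∀ i, restD P D i ⊆ D
  | 0 => subset_rfl
  | i + 1 => (Finset.filter_subset _ _).trans (restD_subset P D i)

lemma stratum_subset (P D : Finset (CC α)) (i : ℕ) : stratum P D i ⊆ D :=
  (Finset.filter_subset _ _).trans (restD_subset P D i)

lemma lexCard_le (P D : Finset (CC α)) (i : ℕ) (Pr : PInterp α) :
    lexCard P D i Pr ≤ (stratum P D i).card :=
  Finset.card_le_card (Finset.filter_subset _ _)

lemma lexCard_of_models (P D : Finset (CC α)) (i : ℕ) (Pr : PInterp α)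
    (h : ∀ d ∈ D, satCC Pr d) : lexCard P D i Pr = (stratum P D i).card := by
  unfold lexCard
  congr 1
  exact Finset.filter_true_of_mem fun d hd => h d (stratum_subset P D i hd)

lemma stratum_empty_succ (P D : Finset (CC α)) (i : ℕ)
    (h : stratum P D i = ∅) : stratum P D (i + 1) = ∅ := by
  have hnt : ∀ d ∈ restD P D i, ¬ tolerates P (restD P D i) d := by
    intro d hd ht
    have : d ∈ stratum P D i := Finset.mem_filter.2 ⟨hd, ht⟩
    simp [h] at this
  have hr : restD P D (i + 1) = restD P D i := by
    show (restD P D i).filter _ = _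
    exact Finset.filter_true_of_mem hnt
  show (restD P D (i + 1)).filter _ = ∅
  rw [hr]
  exact h

lemma stratum_empty_of_le (P D : Finset (CC α)) {i j : ℕ}
    (h : stratum P D i = ∅) (hij : i ≤ j) : stratum P D j = ∅ := by
  induction j, hij using Nat.le_induction with
  | base => exact h
  | succ n hn ih => exact stratum_empty_succ P D n ih

lemma restD_card_lt (P D : Finset (CC α)) (i : ℕ)
    (h : (stratum P D i).Nonempty) :
    (restD P D (i + 1)).card < (restD P D i).card := by
  obtain ⟨d, hd⟩ := h
  obtain ⟨hdr, hdt⟩ := Finset.mem_filter.1 hd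
  apply Finset.card_lt_card
  show (restD P D i).filter (fun d => ¬ tolerates P (restD P D i) d) ⊂ restD P D i
  rw [Finset.ssubset_iff_of_subset (Finset.filter_subset _ _)]
  exact ⟨d, hdr, by simp [Finset.mem_filter, hdt]⟩

lemma restD_card_bound (P D : Finset (CC α)) :
    ∀ i, (∀ j < i, (stratum P D j).Nonempty) → (restD P D i).card + i ≤ D.card
  | 0, _ => by simpa using Finset.card_le_card (restD_subset P D 0)
  | i + 1, h => by
    have h1 := restD_card_lt P D i (h i (Nat.lt_succ_self i))
    have h2 := restD_card_bound P D i (fun j hj => h j (hj.trans (Nat.lt_succ_self i)))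
    omega

lemma stratum_lt_card (P D : Finset (CC α)) (i : ℕ)
    (h : (stratum P D i).Nonempty) : i < D.card := by
  have hall : ∀ j < i, (stratum P D j).Nonempty := by
    intro j hj
    rw [Finset.nonempty_iff_ne_empty]
    intro he
    rw [Finset.nonempty_iff_ne_empty] at h
    exact h (stratum_empty_of_le P D he hj.le)
  have hb := restD_card_bound P D i hall
  have hne : (restD P D i).Nonempty := ⟨h.choose, Finset.mem_filter.1 h.choose_spec |>.1⟩
  have := Finset.card_pos.2 hne
  omega

lemma stratum_empty_of_ge (P D : Finset (CC α)) {i : ℕ}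
    (h : D.card ≤ i) : stratum P D i = ∅ := by
  rw [← Finset.not_nonempty_iff_eq_empty]
  intro hne
  exact absurd (stratum_lt_card P D i hne) (not_lt.2 h)

theorem stmt15 {α : Type} [Fintype α] [DecidableEq α]
    (P D : Finset (CC α)) (hcons : zConsistent P D) (KB : ProbForm α)
    (hsat : ∃ Pr : PInterp α, modelsF Pr (P ∪ D) ∧ psat Pr KB) :
    (∀ Pr : PInterp α,
      ((modelsF Pr P ∧ psat Pr KB) ∧
        ∀ Pr' : PInterp α, modelsF Pr' P ∧ psat Pr' KB → ¬ lexPref P D Pr' Pr)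
      ↔ (modelsF Pr (P ∪ D) ∧ psat Pr KB)) ∧
    (∀ F : ProbForm α,
      (∀ Pr : PInterp α,
        ((modelsF Pr P ∧ psat Pr KB) ∧
          ∀ Pr' : PInterp α, modelsF Pr' P ∧ psat Pr' KB → ¬ lexPref P D Pr' Pr) →
        psat Pr F)
      ↔ (∀ Pr : PInterp α, modelsF Pr (P ∪ D) ∧ psat Pr KB → psat Pr F)) := by
  obtain ⟨Pr₀, hPr₀, hKB₀⟩ := hsat
  have hP₀ : modelsF Pr₀ P := fun c hc => hPr₀ c (Finset.mem_union_left _ hc)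
  have hD₀ : ∀ d ∈ D, satCC Pr₀ d := fun d hd => hPr₀ d (Finset.mem_union_right _ hd)
  have main : ∀ Pr : PInterp α,
      ((modelsF Pr P ∧ psat Pr KB) ∧
        ∀ Pr' : PInterp α, modelsF Pr' P ∧ psat Pr' KB → ¬ lexPref P D Pr' Pr)
      ↔ (modelsF Pr (P ∪ D) ∧ psat Pr KB) := by
    intro Pr
    constructor
    · rintro ⟨⟨hP, hKB⟩, hmin⟩
      refine ⟨?_, hKB⟩
      intro c hc
      rcases Finset.mem_union.1 hc with h | h
      · exact hP c h
      · by_contra hns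
        obtain ⟨i₀, hi₀⟩ := hcons c h
        have hlt : lexCard P D i₀ Pr < (stratum P D i₀).card := by
          apply Finset.card_lt_card
          rw [Finset.ssubset_iff_of_subset (Finset.filter_subset _ _)]
          exact ⟨c, hi₀, by simp [Finset.mem_filter, hns]⟩
        set T := (Finset.range D.card).filter
          (fun i => lexCard P D i Pr ≠ lexCard P D i Pr₀) with hT
        have hi₀T : i₀ ∈ T := by
          refine Finset.mem_filter.2
            ⟨Finset.mem_range.2 (stratum_lt_card P D i₀ ⟨c, hi₀⟩), ?_⟩
          rw [lexCard_of_models P D i₀ Pr₀ hD₀]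
          exact ne_of_lt hlt
        have hTne : T.Nonempty := ⟨i₀, hi₀T⟩
        obtain ⟨hir, hine⟩ := Finset.mem_filter.1 (T.max'_mem hTne)
        apply hmin Pr₀ ⟨hP₀, hKB₀⟩
        refine ⟨T.max' hTne, ?_, ?_⟩
        · rw [lexCard_of_models P D (T.max' hTne) Pr₀ hD₀] at hine ⊢
          exact lt_of_le_of_ne (lexCard_le P D _ Pr) hine
        · intro j hj
          by_cases hjc : j < D.card
          · by_contra hne
            exact absurd
              (T.le_max' j (Finset.mem_filter.2 ⟨Finset.mem_range.2 hjc, fun e => hne e.symm⟩))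
              (not_le.2 hj)
          · have he : stratum P D j = ∅ := stratum_empty_of_ge P D (le_of_not_gt hjc)
            unfold lexCard
            rw [he]
            simp
    · rintro ⟨hPD, hKB⟩
      have hDsat : ∀ d ∈ D, satCC Pr d := fun d hd => hPD d (Finset.mem_union_right _ hd)
      refine ⟨⟨fun c hc => hPD c (Finset.mem_union_left _ hc), hKB⟩, ?_⟩
      rintro Pr' _ ⟨i, hlt, _⟩
      have h1 := lexCard_le P D i Pr'
      rw [lexCard_of_models P D i Pr hDsat] at hlt
      omega
  exact ⟨main, fun F =>
    ⟨fun h Pr hPr => h Pr ((main Pr).mpr hPr),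
     fun h Pr hPr => h Pr ((main Pr).mp hPr)⟩⟩
end

section
/- Let T = (P, D) be a σ-consistent probabilistic default theory and KB such that P ∪ D ∪ {KB} is satisfiable. Then a probabilistic interpretation Pr is a z-minimal model of P ∪ {KB} iff Pr is a model of P ∪ D ∪ {KB}. Hence z-entailment coincides with logical entailment from P ∪ D ∪ {KB}: KB ∼z F iff P ∪ D ∪ {KB} ⊨ F. -/
open scoped Classical

variable {α : Type} [Fintype α] [DecidableEq α]

theorem modelsF.mono {Pr : PInterp α} {S T : Finset (CC α)} (hT : modelsF Pr T) (hST : S ⊆ T) :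
    modelsF Pr S :=
  fun c hc => hT c (hST hc)

theorem kappaZ_eq_zero_iff {P D : Finset (CC α)} {Pr : PInterp α} :
    kappaZ P D Pr = 0 ↔ modelsF Pr (P ∪ D) := by
  by_cases hP : modelsF Pr P
  · by_cases hPD : modelsF Pr (P ∪ D) <;> simp [kappaZ, hP, hPD]
  · simpa [kappaZ, hP] using fun hPD => hP (hPD.mono Finset.subset_union_left)

theorem minimal_iff_eq_bot_of_exists {β M : Type*} [PartialOrder M] [OrderBot M]
    {S : β → Prop} {f : β → M} (hbot : ∃ y, S y ∧ f y = ⊥) (x : β) :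
    (S x ∧ ∀ y, S y → ¬ f y < f x) ↔ (S x ∧ f x = ⊥) := by
  obtain ⟨y, hy, hfy⟩ := hbot
  refine and_congr_right fun _ => ⟨fun hmin => ?_, fun hfx _ _ => hfx ▸ not_lt_bot⟩
  exact not_bot_lt_iff.mp (hfy ▸ hmin y hy)

def IsZMinimal (P D : Finset (CC α)) (KB : ProbForm α) (Pr : PInterp α) : Prop :=
  (modelsF Pr P ∧ psat Pr KB) ∧
    ∀ Pr' : PInterp α, modelsF Pr' P ∧ psat Pr' KB → ¬ kappaZ P D Pr' < kappaZ P D Pr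

theorem isZMinimal_iff_of_satisfiable {P D : Finset (CC α)} {KB : ProbForm α}
    (hsat : ∃ Pr : PInterp α, modelsF Pr (P ∪ D) ∧ psat Pr KB) (Pr : PInterp α) :
    IsZMinimal P D KB Pr ↔ modelsF Pr (P ∪ D) ∧ psat Pr KB := by
  have hbot : ∃ Pr : PInterp α, (modelsF Pr P ∧ psat Pr KB) ∧ kappaZ P D Pr = ⊥ := by
    obtain ⟨Pr, hPD, hKB⟩ := hsat
    exact ⟨Pr, ⟨hPD.mono Finset.subset_union_left, hKB⟩, kappaZ_eq_zero_iff.mpr hPD⟩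
  rw [IsZMinimal, minimal_iff_eq_bot_of_exists hbot, bot_eq_zero', kappaZ_eq_zero_iff]
  exact ⟨fun ⟨⟨_, hKB⟩, hPD⟩ => ⟨hPD, hKB⟩,
    fun ⟨hPD, hKB⟩ => ⟨⟨hPD.mono Finset.subset_union_left, hKB⟩, hPD⟩⟩

theorem stmt16_general {α : Type} [Fintype α] [DecidableEq α]
    (P D : Finset (CC α)) (KB : ProbForm α)
    (hsat : ∃ Pr : PInterp α, modelsF Pr (P ∪ D) ∧ psat Pr KB) :
    (∀ Pr : PInterp α,
      ((modelsF Pr P ∧ psat Pr KB) ∧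
        ∀ Pr' : PInterp α, modelsF Pr' P ∧ psat Pr' KB →
          ¬ kappaZ P D Pr' < kappaZ P D Pr)
      ↔ (modelsF Pr (P ∪ D) ∧ psat Pr KB)) ∧
    (∀ F : ProbForm α,
      (∀ Pr : PInterp α,
        ((modelsF Pr P ∧ psat Pr KB) ∧
          ∀ Pr' : PInterp α, modelsF Pr' P ∧ psat Pr' KB →
            ¬ kappaZ P D Pr' < kappaZ P D Pr) →
        psat Pr F)
      ↔ (∀ Pr : PInterp α, modelsF Pr (P ∪ D) ∧ psat Pr KB → psat Pr F)) :=
  ⟨isZMinimal_iff_of_satisfiable hsat,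
    fun _ => forall_congr' fun Pr => imp_congr_left (isZMinimal_iff_of_satisfiable hsat Pr)⟩

theorem stmt16 {α : Type} [Fintype α] [DecidableEq α]
    (P D : Finset (CC α)) (hcons : zConsistent P D) (KB : ProbForm α)
    (hsat : ∃ Pr : PInterp α, modelsF Pr (P ∪ D) ∧ psat Pr KB) :
    (∀ Pr : PInterp α,
      ((modelsF Pr P ∧ psat Pr KB) ∧
        ∀ Pr' : PInterp α, modelsF Pr' P ∧ psat Pr' KB →
          ¬ kappaZ P D Pr' < kappaZ P D Pr)
      ↔ (modelsF Pr (P ∪ D) ∧ psat Pr KB)) ∧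
    (∀ F : ProbForm α,
      (∀ Pr : PInterp α,
        ((modelsF Pr P ∧ psat Pr KB) ∧
          ∀ Pr' : PInterp α, modelsF Pr' P ∧ psat Pr' KB →
            ¬ kappaZ P D Pr' < kappaZ P D Pr) →
        psat Pr F)
      ↔ (∀ Pr : PInterp α, modelsF Pr (P ∪ D) ∧ psat Pr KB → psat Pr F)) :=
  stmt16_general P D KB hsat
end

section
/- Let T = (P, D) be a ≺-consistent probabilistic default theory and KB such that P ∪ D ∪ {KB} is satisfiable. Then for every priority ordering ≺ admissible with T, the ≺-minimal models of P ∪ {KB} are exactly the models of P ∪ D ∪ {KB}; hence the conditionally minimal models of P ∪ {KB} are exactly the models of P ∪ D ∪ {KB}, and conditional entailment coincides with logical entailment from P ∪ D ∪ {KB}. -/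
open scoped Classical

variable {α : Type} [Fintype α] [DecidableEq α]

/-- `Pr` is a `≺`-minimal model of `P ∪ {KB}`. -/
def precMinimal {α : Type} [Fintype α] [DecidableEq α]
    (P D : Finset (CC α)) (KB : ProbForm α)
    (prec : CC α → CC α → Prop) (Pr : PInterp α) : Prop :=
  (modelsF Pr P ∧ psat Pr KB) ∧
  ∀ Pr' : PInterp α, modelsF Pr' P ∧ psat Pr' KB → ¬ precPref D prec Pr' Pr

/-- `Pr` is a conditionally minimal model of `P ∪ {KB}`. -/
def condMinimal {α : Type} [Fintype α] [DecidableEq α]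
    (P D : Finset (CC α)) (KB : ProbForm α) (Pr : PInterp α) : Prop :=
  ∃ prec : CC α → CC α → Prop, (∀ d, ¬ prec d d) ∧
    (∀ a b c, prec a b → prec b c → prec a c) ∧
    precAdmissible P D prec ∧ precMinimal P D KB prec Pr

theorem stmt17 {α : Type} [Fintype α] [DecidableEq α]
    (P D : Finset (CC α)) (KB : ProbForm α)
    (hpc : ∃ prec : CC α → CC α → Prop, (∀ d, ¬ prec d d) ∧
      (∀ a b c, prec a b → prec b c → prec a c) ∧ precAdmissible P D prec)
    (hsat : ∃ Pr : PInterp α, modelsF Pr (P ∪ D) ∧ psat Pr KB) :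
    (∀ prec : CC α → CC α → Prop, (∀ d, ¬ prec d d) →
      (∀ a b c, prec a b → prec b c → prec a c) → precAdmissible P D prec →
      ∀ Pr : PInterp α,
        precMinimal P D KB prec Pr ↔ (modelsF Pr (P ∪ D) ∧ psat Pr KB)) ∧
    (∀ Pr : PInterp α,
      condMinimal P D KB Pr ↔ (modelsF Pr (P ∪ D) ∧ psat Pr KB)) ∧
    (∀ F : ProbForm α,
      (∀ Pr : PInterp α, condMinimal P D KB Pr → psat Pr F) ↔
      (∀ Pr : PInterp α, modelsF Pr (P ∪ D) ∧ psat Pr KB → psat Pr F)) := by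

  obtain ⟨Pr0, hPr0, hKB0⟩ := hsat
  have hPr0D : ∀ d ∈ D, satCC Pr0 d := fun d hd => hPr0 d (Finset.mem_union_right _ hd)
  have hfilt0 : (D.filter fun d => ¬ satCC Pr0 d) = ∅ := by
    rw [Finset.filter_eq_empty_iff]
    exact fun x hx hn => hn (hPr0D x hx)
  have key : ∀ prec : CC α → CC α → Prop, ∀ Pr : PInterp α,
      precMinimal P D KB prec Pr ↔ (modelsF Pr (P ∪ D) ∧ psat Pr KB) := by
    intro prec Pr
    constructor
    · rintro ⟨⟨hP, hKB⟩, hmin⟩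
      refine ⟨fun c hc => ?_, hKB⟩
      rcases Finset.mem_union.mp hc with h | h
      · exact hP c h
      · by_contra hviol
        apply hmin Pr0 ⟨fun c hc => hPr0 c (Finset.mem_union_left _ hc), hKB0⟩
        refine ⟨?_, ?_⟩
        · rw [hfilt0]
          intro heq
          have : c ∈ (D.filter fun d => ¬ satCC Pr d) :=
            Finset.mem_filter.mpr ⟨h, hviol⟩
          rw [← heq] at this
          exact absurd this (Finset.notMem_empty c)
        · intro d hd hv _
          exact absurd (hPr0D d hd) hv
    · rintro ⟨hPD, hKB⟩
      have hsatD : ∀ d ∈ D, satCC Pr d := fun d hd => hPD d (Finset.mem_union_right _ hd)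
      have hfilt : (D.filter fun d => ¬ satCC Pr d) = ∅ := by
        rw [Finset.filter_eq_empty_iff]
        exact fun x hx hn => hn (hsatD x hx)
      refine ⟨⟨fun c hc => hPD c (Finset.mem_union_left _ hc), hKB⟩, ?_⟩
      rintro Pr' ⟨hP', hKB'⟩ ⟨hne, hall⟩
      rw [hfilt] at hne
      obtain ⟨d, hd⟩ := Finset.nonempty_iff_ne_empty.mpr hne
      have hd' := Finset.mem_filter.mp hd
      obtain ⟨d', _, _, _, hnsat⟩ := hall d hd'.1 hd'.2 (hsatD d hd'.1)
      exact hnsat (hsatD d' ‹d' ∈ D›)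
  obtain ⟨prec0, hirr0, htr0, hadm0⟩ := hpc
  refine ⟨fun prec _ _ _ Pr => key prec Pr, ?_, ?_⟩
  · intro Pr
    constructor
    · rintro ⟨prec, _, _, _, hmin⟩
      exact (key prec Pr).mp hmin
    · intro h
      exact ⟨prec0, hirr0, htr0, hadm0, (key prec0 Pr).mpr h⟩
  · intro F
    constructor
    · intro h Pr hm
      exact h Pr ⟨prec0, hirr0, htr0, hadm0, (key prec0 Pr).mpr hm⟩
    · rintro h Pr ⟨prec, _, _, _, hmin⟩
      exact h Pr ((key prec Pr).mp hmin)
end
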